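/- Freedman-style corollary (Proposition 'nice trick'): Let Z_1, ..., Z_s be random variables adapted to a filtration with |Z_j| ≤ A almost surely, conditional variance V_j := Var[Z_j | Z_1,...,Z_{j-1}] ≤ B·E[Z_j | Z_1,...,Z_{j-1}] + C almost surely, where 4A ≤ B ≤ 1 and C > 0. Then for fixed ρ_1 < ρ_2 and any q ∈ (-ρ_1, 2ρ_2 - ρ_1 - 2sC/B], we have P[∑_j Z_j < -q and ∑_j E[Z_j | Z_1,...,Z_{j-1}] ∈ [ρ_1, ρ_2]] ≤ exp(-(ρ_1 + q)²/(4Bρ_2)). -/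

import Mathlib

/-!
The increments `Y j = μ[Z j | ℱ (j-1)] - Z j` are martingale differences bounded by `D = 2A`.
The Bernstein-type bound `exp x ≤ 1 + x + x² / (2(1 - u))` for `|x| ≤ u < 1` makes
`exp (∑ θ Y j - φ μ[(Y j)² | ℱ (j-1)])` a supermartingale as soon as `φ ≥ θ² / (2(1 - θD))`.
On the event, `∑ Y j ≥ ℓ := ρ₁ + q` and the conditional variances sum to at most
`v := Bρ₂ + sC`, so Markov's inequality with `θ = ℓ / (v + Dℓ)` gives Freedman's bound
`exp (-ℓ² / (2(v + Dℓ)))`. Finally `4A ≤ B` and `q ≤ 2ρ₂ - ρ₁ - 2sC/B` give `v + Dℓ ≤ 2Bρ₂`.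
-/

open MeasureTheory ProbabilityTheory

lemma Real.exp_le_one_add_add_sq_div {x u : ℝ} (hx : |x| ≤ u) (hu : u < 1) :
    Real.exp x ≤ 1 + x + x ^ 2 / (2 * (1 - u)) := by
  have htaylor := Real.exp_bound (hx.trans hu.le) (n := 3) (by norm_num)
  norm_num [Finset.sum_range_succ, Nat.factorial] at htaylor
  have hcubic : |x| ^ 3 ≤ x ^ 2 * u := by
    rw [pow_succ, sq_abs]; exact mul_le_mul_of_nonneg_left hx (sq_nonneg _)
  have hsq : x ^ 2 / 2 + x ^ 2 * u / 2 ≤ x ^ 2 / (2 * (1 - u)) := by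
    rw [le_div_iff₀ (by linarith)]; nlinarith [mul_nonneg (sq_nonneg x) (sq_nonneg u)]
  have hxu : 0 ≤ x ^ 2 * u := mul_nonneg (sq_nonneg x) ((abs_nonneg x).trans hx)
  linarith [le_abs_self (Real.exp x - (1 + x + x ^ 2 / 2))]

section

variable {Ω : Type*} {m m0 : MeasurableSpace Ω} {μ : Measure Ω}

lemma integrable_exp_of_ae_le [IsFiniteMeasure μ] {f : Ω → ℝ} {c : ℝ}
    (hf : AEStronglyMeasurable f μ) (hfc : ∀ᵐ ω ∂μ, f ω ≤ c) :
    Integrable (fun ω => Real.exp (f ω)) μ :=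
  .of_bound (Real.continuous_exp.comp_aestronglyMeasurable hf) (Real.exp c)
    (hfc.mono fun ω h => by rwa [Real.norm_eq_abs, abs_of_pos (Real.exp_pos _), Real.exp_le_exp])

lemma condExp_exp_mul_le [IsFiniteMeasure μ] (hm : m ≤ m0) {Y : Ω → ℝ} {D θ φ : ℝ}
    (hY : AEStronglyMeasurable Y μ) (hbdd : ∀ᵐ ω ∂μ, |Y ω| ≤ D) (hmean : μ[Y|m] =ᵐ[μ] 0)
    (hθ : 0 ≤ θ) (hθD : θ * D < 1) (hφ : θ ^ 2 / (2 * (1 - θ * D)) ≤ φ) :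
    μ[fun ω => Real.exp (θ * Y ω)|m] ≤ᵐ[μ] fun ω => Real.exp (φ * μ[fun ω => Y ω ^ 2|m] ω) := by
  have hYint : Integrable Y μ := .of_bound hY D hbdd
  have hY2int : Integrable (fun ω => Y ω ^ 2) μ :=
    .of_bound (hY.pow 2) (D ^ 2) (hbdd.mono fun ω h => by
      simpa [Real.norm_eq_abs, abs_pow] using pow_le_pow_left₀ (abs_nonneg _) h 2)
  have hexpint : Integrable (fun ω => Real.exp (θ * Y ω)) μ := integrable_exp_of_ae_le
    (hY.const_mul θ) (hbdd.mono fun ω h => mul_le_mul_of_nonneg_left ((le_abs_self _).trans h) hθ)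
  have hquad : (fun ω => Real.exp (θ * Y ω))
      ≤ᵐ[μ] (fun _ => (1 : ℝ)) + θ • Y + φ • fun ω => Y ω ^ 2 := by
    filter_upwards [hbdd] with ω h
    have hθY : |θ * Y ω| ≤ θ * D := by
      rw [abs_mul, abs_of_nonneg hθ]; exact mul_le_mul_of_nonneg_left h hθ
    calc Real.exp (θ * Y ω) ≤ 1 + θ * Y ω + (θ * Y ω) ^ 2 / (2 * (1 - θ * D)) :=
          Real.exp_le_one_add_add_sq_div hθY hθD
      _ = 1 + θ * Y ω + θ ^ 2 / (2 * (1 - θ * D)) * Y ω ^ 2 := by ring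
      _ ≤ 1 + θ * Y ω + φ * Y ω ^ 2 := by gcongr
  have hlin : μ[(fun _ => (1 : ℝ)) + θ • Y + φ • fun ω => Y ω ^ 2|m]
      =ᵐ[μ] (fun _ => (1 : ℝ)) + θ • μ[Y|m] + φ • μ[fun ω => Y ω ^ 2|m] := by
    filter_upwards [condExp_add ((integrable_const (1 : ℝ)).add (hYint.smul θ)) (hY2int.smul φ) m,
      condExp_add (integrable_const (1 : ℝ)) (hYint.smul θ) m, condExp_smul θ Y m,
      condExp_smul φ (fun ω => Y ω ^ 2) m] with ω h₁ h₂ h₃ h₄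
    rw [h₁, Pi.add_apply, h₂, Pi.add_apply, h₃, h₄, condExp_const hm]; rfl
  filter_upwards [condExp_mono hexpint
    (((integrable_const (1 : ℝ)).add (hYint.smul θ)).add (hY2int.smul φ)) hquad, hlin, hmean]
    with ω h₁ h₂ h₃
  rw [h₂] at h₁
  simp only [Pi.add_apply, Pi.smul_apply, smul_eq_mul, h₃, Pi.zero_apply] at h₁
  linarith [Real.add_one_le_exp (φ * μ[fun ω => Y ω ^ 2|m] ω)]

lemma condExp_condExp_sub_ae_eq_zero [IsFiniteMeasure μ] (hm : m ≤ m0) {f : Ω → ℝ}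
    (hf : Integrable f μ) : μ[μ[f|m] - f|m] =ᵐ[μ] 0 := by
  filter_upwards [condExp_sub integrable_condExp hf m] with ω h
  rw [h, condExp_of_stronglyMeasurable hm stronglyMeasurable_condExp integrable_condExp]
  simp

section Freedman

variable {ℱ : Filtration ℕ m0} {Y : ℕ → Ω → ℝ} {D θ φ : ℝ}

variable (μ ℱ Y θ φ) in
noncomputable def freedmanExponent (k : ℕ) (ω : Ω) : ℝ :=
  ∑ j ∈ Finset.Icc 1 k, (θ * Y j ω - φ * μ[fun ω => Y j ω ^ 2|ℱ (j - 1)] ω)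

lemma freedmanExponent_succ (k : ℕ) (ω : Ω) :
    freedmanExponent μ ℱ Y θ φ (k + 1) ω
      = freedmanExponent μ ℱ Y θ φ k ω
        + (θ * Y (k + 1) ω - φ * μ[fun ω => Y (k + 1) ω ^ 2|ℱ k] ω) := by
  rw [freedmanExponent, Finset.sum_Icc_succ_top (Nat.le_add_left 1 k), Nat.add_sub_cancel]
  rfl

lemma stronglyMeasurable_freedmanExponent (hY : ∀ j, StronglyMeasurable[ℱ j] (Y j)) (k : ℕ) :
    StronglyMeasurable[ℱ k] (freedmanExponent μ ℱ Y θ φ k) := by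
  unfold freedmanExponent
  refine Finset.stronglyMeasurable_fun_sum _ fun j hj => ?_
  have hjk := (Finset.mem_Icc.1 hj).2
  exact (((hY j).mono (ℱ.mono hjk)).const_mul θ).sub
    ((stronglyMeasurable_condExp.mono (ℱ.mono (j.sub_le 1 |>.trans hjk))).const_mul φ)

lemma ae_freedmanExponent_le {k : ℕ} (hbdd : ∀ j ∈ Finset.Icc 1 k, ∀ᵐ ω ∂μ, |Y j ω| ≤ D)
    (hθ : 0 ≤ θ) (hφ : 0 ≤ φ) :
    ∀ᵐ ω ∂μ, freedmanExponent μ ℱ Y θ φ k ω ≤ k * (θ * D) := by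
  have hvar : ∀ j ∈ Finset.Icc 1 k, 0 ≤ᵐ[μ] μ[fun ω => Y j ω ^ 2|ℱ (j - 1)] :=
    fun j _ => condExp_nonneg (.of_forall fun ω => sq_nonneg _)
  filter_upwards [(Filter.eventually_all_finset _).2 hbdd,
    (Filter.eventually_all_finset _).2 hvar] with ω hY hV
  calc freedmanExponent μ ℱ Y θ φ k ω ≤ ∑ _j ∈ Finset.Icc 1 k, θ * D := by
        refine Finset.sum_le_sum fun j hj => ?_
        have := mul_le_mul_of_nonneg_left ((le_abs_self _).trans (hY j hj)) hθ
        nlinarith [mul_nonneg hφ (hV j hj)]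
    _ = k * (θ * D) := by simp

lemma integrable_exp_freedmanExponent [IsFiniteMeasure μ] (hY : ∀ j, StronglyMeasurable[ℱ j] (Y j))
    {k : ℕ} (hbdd : ∀ j ∈ Finset.Icc 1 k, ∀ᵐ ω ∂μ, |Y j ω| ≤ D) (hθ : 0 ≤ θ) (hφ : 0 ≤ φ) :
    Integrable (fun ω => Real.exp (freedmanExponent μ ℱ Y θ φ k ω)) μ :=
  integrable_exp_of_ae_le
    ((stronglyMeasurable_freedmanExponent hY k).mono (ℱ.le k)).aestronglyMeasurable
    (ae_freedmanExponent_le hbdd hθ hφ)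

lemma integral_exp_freedmanExponent_succ_le [IsFiniteMeasure μ]
    (hY : ∀ j, StronglyMeasurable[ℱ j] (Y j)) {k : ℕ}
    (hbdd : ∀ j ∈ Finset.Icc 1 (k + 1), ∀ᵐ ω ∂μ, |Y j ω| ≤ D) (hmean : μ[Y (k + 1)|ℱ k] =ᵐ[μ] 0)
    (hθ : 0 ≤ θ) (hθD : θ * D < 1) (hφ : θ ^ 2 / (2 * (1 - θ * D)) ≤ φ) :
    ∫ ω, Real.exp (freedmanExponent μ ℱ Y θ φ (k + 1) ω) ∂μ
      ≤ ∫ ω, Real.exp (freedmanExponent μ ℱ Y θ φ k ω) ∂μ := by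
  have hφ₀ : 0 ≤ φ := (div_nonneg (sq_nonneg θ) (by linarith)).trans hφ
  set V := μ[fun ω => Y (k + 1) ω ^ 2|ℱ k]
  set X : Ω → ℝ := fun ω => Real.exp (freedmanExponent μ ℱ Y θ φ k ω - φ * V ω)
  set E : Ω → ℝ := fun ω => Real.exp (θ * Y (k + 1) ω)
  have hX : StronglyMeasurable[ℱ k] X :=
    Real.continuous_exp.comp_stronglyMeasurable
      ((stronglyMeasurable_freedmanExponent hY k).sub (stronglyMeasurable_condExp.const_mul φ))
  have hsucc : (fun ω => Real.exp (freedmanExponent μ ℱ Y θ φ (k + 1) ω)) = X * E := by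
    ext ω
    simp only [freedmanExponent_succ, Pi.mul_apply, X, E, V, ← Real.exp_add]
    congr 1
    ring
  have hprev : (fun ω => Real.exp (freedmanExponent μ ℱ Y θ φ k ω))
      = fun ω => X ω * Real.exp (φ * V ω) := by
    ext ω
    simp only [X, ← Real.exp_add]
    congr 1
    ring
  have hYk : ∀ᵐ ω ∂μ, |Y (k + 1) ω| ≤ D := hbdd (k + 1) (by simp)
  have hYk_meas : AEStronglyMeasurable (Y (k + 1)) μ := ((hY _).mono (ℱ.le _)).aestronglyMeasurable
  have hE : Integrable E μ := integrable_exp_of_ae_le (hYk_meas.const_mul θ)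
    (hYk.mono fun ω h => mul_le_mul_of_nonneg_left ((le_abs_self _).trans h) hθ)
  have hXE : Integrable (X * E) μ := hsucc ▸ integrable_exp_freedmanExponent hY hbdd hθ hφ₀
  rw [hsucc, hprev, ← integral_condExp (ℱ.le k)]
  calc ∫ ω, μ[X * E|ℱ k] ω ∂μ = ∫ ω, X ω * μ[E|ℱ k] ω ∂μ :=
        integral_congr_ae (condExp_mul_of_stronglyMeasurable_left hX hXE hE)
    _ ≤ ∫ ω, X ω * Real.exp (φ * V ω) ∂μ := by
      refine integral_mono_of_nonneg ?_ (hprev ▸ integrable_exp_freedmanExponent hY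
        (fun j hj => hbdd j (Finset.Icc_subset_Icc_right k.le_succ hj)) hθ hφ₀) ?_
      · filter_upwards [condExp_nonneg (μ := μ) (m := ℱ k) (f := E)
          (.of_forall fun ω => (Real.exp_pos _).le)] with ω h
        exact mul_nonneg (Real.exp_pos _).le h
      · filter_upwards [condExp_exp_mul_le (ℱ.le k) hYk_meas hYk hmean hθ hθD hφ] with ω h
        exact mul_le_mul_of_nonneg_left h (Real.exp_pos _).le

lemma integral_exp_freedmanExponent_le_one [IsProbabilityMeasure μ]
    (hY : ∀ j, StronglyMeasurable[ℱ j] (Y j)) {s : ℕ}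
    (hbdd : ∀ j ∈ Finset.Icc 1 s, ∀ᵐ ω ∂μ, |Y j ω| ≤ D)
    (hmean : ∀ j ∈ Finset.Icc 1 s, μ[Y j|ℱ (j - 1)] =ᵐ[μ] 0)
    (hθ : 0 ≤ θ) (hθD : θ * D < 1) (hφ : θ ^ 2 / (2 * (1 - θ * D)) ≤ φ) :
    ∫ ω, Real.exp (freedmanExponent μ ℱ Y θ φ s ω) ∂μ ≤ 1 := by
  induction s with
  | zero => simp [freedmanExponent]
  | succ k ih =>
    have hsub := Finset.Icc_subset_Icc_right (a := 1) k.le_succ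
    refine (integral_exp_freedmanExponent_succ_le hY hbdd ?_ hθ hθD hφ).trans
      (ih (fun j hj => hbdd j (hsub hj)) (fun j hj => hmean j (hsub hj)))
    simpa using hmean (k + 1) (by simp)

theorem freedman_inequality [IsProbabilityMeasure μ] (hY : ∀ j, StronglyMeasurable[ℱ j] (Y j))
    {s : ℕ} (hbdd : ∀ j ∈ Finset.Icc 1 s, ∀ᵐ ω ∂μ, |Y j ω| ≤ D)
    (hmean : ∀ j ∈ Finset.Icc 1 s, μ[Y j|ℱ (j - 1)] =ᵐ[μ] 0)
    {ℓ v : ℝ} (hD : 0 ≤ D) (hℓ : 0 ≤ ℓ) (hv : 0 < v) :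
    μ {ω | ℓ ≤ ∑ j ∈ Finset.Icc 1 s, Y j ω ∧
        ∑ j ∈ Finset.Icc 1 s, μ[fun ω => Y j ω ^ 2|ℱ (j - 1)] ω ≤ v}
      ≤ ENNReal.ofReal (Real.exp (-ℓ ^ 2 / (2 * (v + D * ℓ)))) := by
  have ht : 0 < v + D * ℓ := by positivity
  set θ := ℓ / (v + D * ℓ)
  set φ := ℓ ^ 2 / (2 * (v + D * ℓ) * v)
  have hθ : 0 ≤ θ := by positivity
  have hθD : θ * D < 1 := by
    rw [div_mul_eq_mul_div, div_lt_one ht]; linarith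
  have hφ : θ ^ 2 / (2 * (1 - θ * D)) = φ := by
    have hgap : 1 - θ * D = v / (v + D * ℓ) := by
      simp only [θ]; field_simp; ring
    rw [hgap]; simp only [θ, φ]; field_simp
  set S := freedmanExponent μ ℱ Y θ φ s
  have hevent : {ω | ℓ ≤ ∑ j ∈ Finset.Icc 1 s, Y j ω ∧
      ∑ j ∈ Finset.Icc 1 s, μ[fun ω => Y j ω ^ 2|ℱ (j - 1)] ω ≤ v}
      ⊆ {ω | ℓ ^ 2 / (2 * (v + D * ℓ)) ≤ S ω} := by
    rintro ω ⟨hsum, hvar⟩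
    have hS : S ω = θ * ∑ j ∈ Finset.Icc 1 s, Y j ω
        - φ * ∑ j ∈ Finset.Icc 1 s, μ[fun ω => Y j ω ^ 2|ℱ (j - 1)] ω := by
      simp only [S, freedmanExponent, Finset.sum_sub_distrib, Finset.mul_sum]
    have hval : θ * ℓ - φ * v = ℓ ^ 2 / (2 * (v + D * ℓ)) := by
      simp only [θ, φ]; field_simp; ring
    have := mul_le_mul_of_nonneg_left hsum hθ
    have := mul_le_mul_of_nonneg_left hvar (hφ ▸ (by positivity : 0 ≤ θ ^ 2 / (2 * (1 - θ * D))))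
    simp only [Set.mem_ofPred_eq, hS]
    linarith
  have hint : Integrable (fun ω => Real.exp (1 * S ω)) μ := by
    simpa using integrable_exp_freedmanExponent hY hbdd hθ (hφ ▸ by positivity)
  have hchernoff := measure_ge_le_exp_mul_mgf (ℓ ^ 2 / (2 * (v + D * ℓ))) zero_le_one hint
  have hmgf : mgf S μ 1 ≤ 1 := by
    simpa [mgf] using integral_exp_freedmanExponent_le_one hY hbdd hmean hθ hθD hφ.le
  calc _ ≤ μ {ω | ℓ ^ 2 / (2 * (v + D * ℓ)) ≤ S ω} := measure_mono hevent
    _ = ENNReal.ofReal (μ.real {ω | ℓ ^ 2 / (2 * (v + D * ℓ)) ≤ S ω}) := by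
      rw [measureReal_def, ENNReal.ofReal_toReal (measure_ne_top _ _)]
    _ ≤ _ := by
      refine ENNReal.ofReal_le_ofReal (hchernoff.trans ?_)
      refine (mul_le_of_le_one_right (Real.exp_pos _).le hmgf).trans_eq ?_
      ring_nf

end Freedman

theorem freedman_lower_tail [IsProbabilityMeasure μ] {ℱ : Filtration ℕ m0} {Z : ℕ → Ω → ℝ}
    (hZ : ∀ j, StronglyMeasurable[ℱ j] (Z j)) {s : ℕ} {A ℓ v : ℝ}
    (hbdd : ∀ j ∈ Finset.Icc 1 s, ∀ᵐ ω ∂μ, |Z j ω| ≤ A) (hA : 0 ≤ A) (hℓ : 0 ≤ ℓ) (hv : 0 < v) :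
    μ {ω | ℓ ≤ ∑ j ∈ Finset.Icc 1 s, (μ[Z j|ℱ (j - 1)] ω - Z j ω) ∧
        ∑ j ∈ Finset.Icc 1 s, condVar (ℱ (j - 1)) (Z j) μ ω ≤ v}
      ≤ ENNReal.ofReal (Real.exp (-ℓ ^ 2 / (2 * (v + 2 * A * ℓ)))) := by
  have hsq : ∀ j, (fun ω => (μ[Z j|ℱ (j - 1)] ω - Z j ω) ^ 2) = (Z j - μ[Z j|ℱ (j - 1)]) ^ 2 :=
    fun j => funext fun ω => by simp only [Pi.pow_apply, Pi.sub_apply]; ring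
  have := freedman_inequality (μ := μ) (D := 2 * A) (ℓ := ℓ) (v := v)
    (Y := fun j ω => μ[Z j|ℱ (j - 1)] ω - Z j ω)
    (fun j => (stronglyMeasurable_condExp.mono (ℱ.mono (j.sub_le 1))).sub (hZ j))
    (fun j hj => by
      filter_upwards [hbdd j hj, ae_bdd_abs_condExp_of_ae_bdd_abs (m := ℱ (j - 1)) (hbdd j hj)]
        with ω hZj hμj
      linarith [abs_sub (μ[Z j|ℱ (j - 1)] ω) (Z j ω)])
    (fun j hj => condExp_condExp_sub_ae_eq_zero (ℱ.le _)
      (.of_bound ((hZ j).mono (ℱ.le j)).aestronglyMeasurable A (hbdd j hj)))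
    (by positivity) hℓ hv
  simpa only [hsq, condVar] using this

lemma setOf_sum_lt_and_sum_condExp_mem_Icc_ae_le {ℱ : Filtration ℕ m0} {Z : ℕ → Ω → ℝ}
    {s : ℕ} {B C ρ₁ ρ₂ q : ℝ}
    (hvar : ∀ j ∈ Finset.Icc 1 s, ∀ᵐ ω ∂μ,
      condVar (ℱ (j - 1)) (Z j) μ ω ≤ B * μ[Z j|ℱ (j - 1)] ω + C) (hB : 0 ≤ B) :
    {ω | ∑ j ∈ Finset.Icc 1 s, Z j ω < -q ∧
        ∑ j ∈ Finset.Icc 1 s, μ[Z j|ℱ (j - 1)] ω ∈ Set.Icc ρ₁ ρ₂}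
      ≤ᵐ[μ] {ω | ρ₁ + q ≤ ∑ j ∈ Finset.Icc 1 s, (μ[Z j|ℱ (j - 1)] ω - Z j ω) ∧
        ∑ j ∈ Finset.Icc 1 s, condVar (ℱ (j - 1)) (Z j) μ ω ≤ B * ρ₂ + s * C} := by
  filter_upwards [(Filter.eventually_all_finset _).2 hvar] with ω hω ⟨hZ, hμ₁, hμ₂⟩
  refine ⟨by rw [Finset.sum_sub_distrib]; linarith, ?_⟩
  calc ∑ j ∈ Finset.Icc 1 s, condVar (ℱ (j - 1)) (Z j) μ ω
      ≤ ∑ j ∈ Finset.Icc 1 s, (B * μ[Z j|ℱ (j - 1)] ω + C) := Finset.sum_le_sum hω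
    _ = B * ∑ j ∈ Finset.Icc 1 s, μ[Z j|ℱ (j - 1)] ω + s * C := by
      simp [Finset.sum_add_distrib, Finset.mul_sum]
    _ ≤ B * ρ₂ + s * C := by gcongr

end

theorem stmt_9_general {Ω : Type*} {m0 : MeasurableSpace Ω} (μ : Measure Ω)
    [IsProbabilityMeasure μ] (ℱ : Filtration ℕ m0)
    (s : ℕ) (Z : ℕ → Ω → ℝ) (A B C ρ₁ ρ₂ q : ℝ)
    (hadapt : ∀ j, StronglyMeasurable[ℱ j] (Z j))
    (hbdd : ∀ j ∈ Finset.Icc 1 s, ∀ᵐ ω ∂μ, |Z j ω| ≤ A)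
    (hvar : ∀ j ∈ Finset.Icc 1 s, ∀ᵐ ω ∂μ,
      (μ[fun ω' => (Z j ω' - (μ[Z j | ℱ (j-1)]) ω')^2 | ℱ (j-1)]) ω
        ≤ B * (μ[Z j | ℱ (j-1)]) ω + C)
    (hAB : 4*A ≤ B) (hC : 0 < C)
    (hq1 : -ρ₁ < q) (hq2 : q ≤ 2*ρ₂ - ρ₁ - 2*(s:ℝ)*C/B) :
    μ {ω | (∑ j ∈ Finset.Icc 1 s, Z j ω) < -q ∧
           (∑ j ∈ Finset.Icc 1 s, (μ[Z j | ℱ (j-1)]) ω) ∈ Set.Icc ρ₁ ρ₂}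
      ≤ ENNReal.ofReal (Real.exp (-(ρ₁+q)^2/(4*B*ρ₂))) := by
  rcases le_or_gt (B * ρ₂) 0 with hBρ | hBρ
  · refine prob_le_one.trans (ENNReal.one_le_ofReal.2 (Real.one_le_exp ?_))
    exact div_nonneg_of_nonpos (neg_nonpos.2 (sq_nonneg _)) (by linarith)
  obtain rfl | hs := Nat.eq_zero_or_pos s
  · have hempty : ¬(q < 0 ∧ ρ₁ ≤ 0 ∧ 0 ≤ ρ₂) := fun h => by linarith [h.1, h.2.1]
    simp [hempty]
  have hA : 0 ≤ A := by
    obtain ⟨ω, hω⟩ := (hbdd 1 (Finset.mem_Icc.2 ⟨le_rfl, hs⟩)).exists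
    exact (abs_nonneg _).trans hω
  have hB : 0 < B := lt_of_le_of_ne (by linarith) (by rintro rfl; simp at hBρ)
  have hsC : 0 ≤ (s : ℝ) * C := by positivity
  have hAℓ : 0 ≤ 2 * A * (ρ₁ + q) := mul_nonneg (by linarith) (by linarith)
  have hden : B * ρ₂ + s * C + 2 * A * (ρ₁ + q) ≤ 4 * B * ρ₂ / 2 := by
    have := mul_le_mul_of_nonneg_left hq2 hB.le
    rw [mul_sub, mul_div_cancel₀ _ hB.ne'] at this
    nlinarith
  calc _ ≤ _ := measure_mono_ae (setOf_sum_lt_and_sum_condExp_mem_Icc_ae_le hvar hB.le)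
    _ ≤ _ := freedman_lower_tail hadapt hbdd hA (by linarith) (by linarith)
    _ ≤ _ := by
      refine ENNReal.ofReal_le_ofReal (Real.exp_le_exp.2 ?_)
      rw [neg_div, neg_div, neg_le_neg_iff]
      exact div_le_div_of_nonneg_left (sq_nonneg _) (by linarith) (by linarith)

theorem stmt_9 {Ω : Type*} {m0 : MeasurableSpace Ω} (μ : Measure Ω)
    [IsProbabilityMeasure μ] (ℱ : Filtration ℕ m0)
    (s : ℕ) (Z : ℕ → Ω → ℝ) (A B C ρ₁ ρ₂ q : ℝ)
    (hadapt : ∀ j, StronglyMeasurable[ℱ j] (Z j))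
    (hbdd : ∀ j ∈ Finset.Icc 1 s, ∀ᵐ ω ∂μ, |Z j ω| ≤ A)
    (hvar : ∀ j ∈ Finset.Icc 1 s, ∀ᵐ ω ∂μ,
      (μ[fun ω' => (Z j ω' - (μ[Z j | ℱ (j-1)]) ω')^2 | ℱ (j-1)]) ω
        ≤ B * (μ[Z j | ℱ (j-1)]) ω + C)
    (hAB : 4*A ≤ B) (hB1 : B ≤ 1) (hC : 0 < C)
    (hρ : ρ₁ < ρ₂) (hq1 : -ρ₁ < q) (hq2 : q ≤ 2*ρ₂ - ρ₁ - 2*(s:ℝ)*C/B) :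
    μ {ω | (∑ j ∈ Finset.Icc 1 s, Z j ω) < -q ∧
           (∑ j ∈ Finset.Icc 1 s, (μ[Z j | ℱ (j-1)]) ω) ∈ Set.Icc ρ₁ ρ₂}
      ≤ ENNReal.ofReal (Real.exp (-(ρ₁+q)^2/(4*B*ρ₂))) :=
  stmt_9_general μ ℱ s Z A B C ρ₁ ρ₂ q hadapt hbdd hvar hAB hC hq1 hq2
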